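/- Let (X, μ) be a σ-finite measure space, N ≥ 1 an integer, p ≥ 2 a real number with conjugate exponent p' = p/(p−1). Let F : X → ℝ^N be p-integrable (F ∈ L^p(μ)) and Γ : X → ℝ^N be p'-integrable (Γ ∈ L^{p'}(μ)). Suppose that for every p-integrable σ : X → ℝ^N one has ∫_X ⟨Γ(x) − ‖σ(x)‖^{p−2}·σ(x), F(x) − σ(x)⟩ dμ(x) ≥ 0. Then Γ(x) = ‖F(x)‖^{p−2}·F(x) for μ-almost every x ∈ X. -/

import Mathlib

open MeasureTheory Filter Topology
open scoped ENNReal RealInnerProductSpace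

/-! Write `J = dualityMap p`, i.e. `J v = ‖v‖ ^ (p - 2) • v`. Testing the inequality with
`σ = F + t • 1ₛ e`, for `s` of finite measure and a fixed vector `e`, gives
`t * ∫ x in s, ⟪Γ x - J (F x + t • e), e⟫ ≤ 0` for every real `t`. Since `‖J v‖ = ‖v‖ ^ (p - 1)`
and `p ≥ 2`, dominated convergence makes this integral continuous in `t`, so letting `t → 0` from
both sides shows `∫ x in s, ⟪Γ x - J (F x), e⟫ = 0`. As `s` and `e` are arbitrary and `μ` is
σ-finite, `Γ = J ∘ F` almost everywhere. -/

section

variable {E : Type*} [NormedAddCommGroup E]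

section DualityMap

variable [NormedSpace ℝ E]

noncomputable def dualityMap (p : ℝ) (v : E) : E := ‖v‖ ^ (p - 2) • v

variable {p : ℝ}

theorem norm_dualityMap (hp : p ≠ 1) (v : E) : ‖dualityMap p v‖ = ‖v‖ ^ (p - 1) := by
  rcases eq_or_ne v 0 with rfl | hv
  · simp [dualityMap, Real.zero_rpow (sub_ne_zero.mpr hp)]
  · rw [dualityMap, norm_smul, Real.norm_of_nonneg (by positivity),
      ← Real.rpow_add_one (norm_ne_zero_iff.mpr hv)]
    ring_nf

theorem continuous_dualityMap (hp : 2 ≤ p) : Continuous (dualityMap (E := E) p) :=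
  (continuous_norm.rpow_const fun _ => Or.inr (by linarith)).smul continuous_id

end DualityMap

theorem one_le_ofReal_conjExponent {p : ℝ} (hp : 1 < p) : 1 ≤ ENNReal.ofReal (p / (p - 1)) := by
  rw [← ENNReal.ofReal_one]
  exact ENNReal.ofReal_le_ofReal ((one_le_div (by linarith)).mpr (by linarith))

namespace MeasureTheory

variable {X : Type*} [MeasurableSpace X] {μ : Measure X} {p : ℝ}

theorem MemLp.integrableOn_of_measure_lt_top {q : ℝ≥0∞} (hq : 1 ≤ q) {f : X → E}
    (hf : MemLp f q μ) {s : Set X} (hs : μ s < ∞) : IntegrableOn f s μ :=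
  have := isFiniteMeasure_restrict.mpr hs.ne
  (hf.restrict s).integrable hq

theorem MemLp.norm_rpow_sub_one (hp : 1 < p) {f : X → E} (hf : MemLp f (ENNReal.ofReal p) μ) :
    MemLp (fun x => ‖f x‖ ^ (p - 1)) (ENNReal.ofReal (p / (p - 1))) μ := by
  have := hf.norm_rpow_div (ENNReal.ofReal (p - 1))
  rwa [ENNReal.toReal_ofReal (by linarith), ← ENNReal.ofReal_div_of_pos (by linarith)] at this

theorem MemLp.dualityMap_comp [NormedSpace ℝ E] (hp : 2 ≤ p) {F : X → E}
    (hF : MemLp F (ENNReal.ofReal p) μ) :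
    MemLp (fun x => dualityMap p (F x)) (ENNReal.ofReal (p / (p - 1))) μ :=
  (hF.norm_rpow_sub_one (by linarith)).of_le
    ((continuous_dualityMap hp).comp_aestronglyMeasurable hF.1)
    (ae_of_all _ fun x => by
      rw [norm_dualityMap (by linarith), Real.norm_of_nonneg (by positivity)])

end MeasureTheory

theorem eq_zero_of_forall_mul_nonpos {φ : ℝ → ℝ} (hφ : ContinuousAt φ 0)
    (h : ∀ t, t * φ t ≤ 0) : φ 0 = 0 := by
  refine le_antisymm ?_ ?_
  · refine le_of_tendsto (hφ.tendsto.mono_left nhdsWithin_le_nhds : Tendsto φ (𝓝[>] 0) _) ?_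
    filter_upwards [self_mem_nhdsWithin] with t (ht : 0 < t)
    exact nonpos_of_mul_nonpos_right (h t) ht
  · refine ge_of_tendsto (hφ.tendsto.mono_left nhdsWithin_le_nhds : Tendsto φ (𝓝[<] 0) _) ?_
    filter_upwards [self_mem_nhdsWithin] with t (ht : t < 0)
    exact nonneg_of_mul_nonpos_right (h t) ht

section Perturbation

variable [InnerProductSpace ℝ E] {X : Type*} [MeasurableSpace X] {p : ℝ}

theorem norm_inner_sub_dualityMap_add_smul_le (hp : 1 < p) (g f e : E) {t : ℝ} (ht : |t| ≤ 1) :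
    ‖⟪g - dualityMap p (f + t • e), e⟫‖ ≤ (‖g‖ + (‖f‖ + ‖e‖) ^ (p - 1)) * ‖e‖ := by
  have hfe : ‖f + t • e‖ ≤ ‖f‖ + ‖e‖ :=
    calc ‖f + t • e‖ ≤ ‖f‖ + |t| * ‖e‖ := by
          rw [← Real.norm_eq_abs, ← norm_smul]; exact norm_add_le _ _
      _ ≤ ‖f‖ + ‖e‖ := by gcongr; exact mul_le_of_le_one_left (norm_nonneg e) ht
  calc ‖⟪g - dualityMap p (f + t • e), e⟫‖ ≤ ‖g - dualityMap p (f + t • e)‖ * ‖e‖ :=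
        norm_inner_le_norm _ _
    _ ≤ (‖g‖ + ‖f + t • e‖ ^ (p - 1)) * ‖e‖ := by
        gcongr; exact (norm_sub_le _ _).trans_eq (by rw [norm_dualityMap hp.ne'])
    _ ≤ (‖g‖ + (‖f‖ + ‖e‖) ^ (p - 1)) * ‖e‖ := by gcongr

theorem continuousAt_integral_inner_sub_dualityMap_add_smul {ν : Measure X} [IsFiniteMeasure ν]
    (hp : 2 ≤ p) {Γ F : X → E} (hΓ : Integrable Γ ν) (hF : MemLp F (ENNReal.ofReal p) ν) (e : E) :
    ContinuousAt (fun t : ℝ => ∫ x, ⟪Γ x - dualityMap p (F x + t • e), e⟫ ∂ν) 0 := by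
  have hp1 : 1 < p := by linarith
  have hbound : Integrable (fun x => (‖F x‖ + ‖e‖) ^ (p - 1)) ν := by
    have hFe : MemLp (fun x => ‖F x‖ + ‖e‖) (ENNReal.ofReal p) ν := hF.norm.add (memLp_const _)
    have := (hFe.norm_rpow_sub_one hp1).integrable (one_le_ofReal_conjExponent hp1)
    simpa only [Real.norm_of_nonneg (by positivity : 0 ≤ ‖F _‖ + ‖e‖)] using this
  refine continuousAt_of_dominated (bound := fun x => (‖Γ x‖ + (‖F x‖ + ‖e‖) ^ (p - 1)) * ‖e‖)
    (Eventually.of_forall fun t => ?_) ?_ ((hΓ.norm.add hbound).mul_const _)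
    (ae_of_all _ fun x => ?_)
  · exact (hΓ.1.sub ((continuous_dualityMap hp).comp_aestronglyMeasurable
      (hF.1.add aestronglyMeasurable_const))).inner aestronglyMeasurable_const
  · filter_upwards [Metric.closedBall_mem_nhds (0 : ℝ) one_pos] with t ht
    refine ae_of_all _ fun x => norm_inner_sub_dualityMap_add_smul_le hp1 _ _ _ ?_
    simpa [Real.dist_eq] using ht
  · exact ((continuous_const.sub ((continuous_dualityMap hp).comp
      (continuous_const.add (continuous_id.smul continuous_const)))).inner
      continuous_const).continuousAt

theorem mul_setIntegral_inner_sub_dualityMap_add_smul_nonpos {μ : Measure X} {Γ F : X → E}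
    (h : ∀ σ : X → E, MemLp σ (ENNReal.ofReal p) μ →
      0 ≤ ∫ x, ⟪Γ x - dualityMap p (σ x), F x - σ x⟫ ∂μ)
    (hF : MemLp F (ENNReal.ofReal p) μ) {s : Set X} (hs : MeasurableSet s) (hμs : μ s < ∞)
    (t : ℝ) (e : E) :
    t * ∫ x in s, ⟪Γ x - dualityMap p (F x + t • e), e⟫ ∂μ ≤ 0 := by
  have hσ := h (fun x => F x + s.indicator (fun _ => t • e) x)
    (hF.add (memLp_indicator_const _ hs (t • e) (Or.inr hμs.ne)))
  have hpointwise : (fun x => ⟪Γ x - dualityMap p (F x + s.indicator (fun _ => t • e) x),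
        F x - (F x + s.indicator (fun _ => t • e) x)⟫)
      = s.indicator (fun x => -(t * ⟪Γ x - dualityMap p (F x + t • e), e⟫)) := by
    funext x
    by_cases hx : x ∈ s
    · simp [hx, inner_neg_right, real_inner_smul_right]
    · simp [hx]
  rw [hpointwise, integral_indicator hs, integral_neg, integral_const_mul] at hσ
  linarith

theorem setIntegral_inner_sub_dualityMap_eq_zero {μ : Measure X} (hp : 2 ≤ p) {Γ F : X → E}
    (h : ∀ σ : X → E, MemLp σ (ENNReal.ofReal p) μ →
      0 ≤ ∫ x, ⟪Γ x - dualityMap p (σ x), F x - σ x⟫ ∂μ)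
    (hF : MemLp F (ENNReal.ofReal p) μ) {s : Set X} (hΓ : IntegrableOn Γ s μ)
    (hs : MeasurableSet s) (hμs : μ s < ∞) (e : E) :
    ∫ x in s, ⟪Γ x - dualityMap p (F x), e⟫ ∂μ = 0 := by
  have := isFiniteMeasure_restrict.mpr hμs.ne
  simpa using eq_zero_of_forall_mul_nonpos
    (continuousAt_integral_inner_sub_dualityMap_add_smul hp hΓ (hF.restrict s) e)
    (mul_setIntegral_inner_sub_dualityMap_add_smul_nonpos h hF hs hμs · e)

end Perturbation

theorem ae_eq_zero_of_forall_setIntegral_inner_eq_zero [InnerProductSpace ℝ E] [CompleteSpace E]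
    {X : Type*} [MeasurableSpace X] {μ : Measure X} [SigmaFinite μ] {f : X → E}
    (hf : ∀ s, MeasurableSet s → μ s < ∞ → IntegrableOn f s μ)
    (h : ∀ s, MeasurableSet s → μ s < ∞ → ∀ e, ∫ x in s, ⟪f x, e⟫ ∂μ = 0) : f =ᵐ[μ] 0 :=
  ae_eq_zero_of_forall_setIntegral_eq_of_sigmaFinite hf fun s hs hμs =>
    integral_eq_zero_of_forall_integral_inner_eq_zero ℝ _ (hf s hs hμs) fun e => by
      simpa only [real_inner_comm] using h s hs hμs e

end

theorem minty_identification_general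
    {X : Type*} [MeasurableSpace X] (μ : Measure X) [SigmaFinite μ]
    (N : ℕ) (p : ℝ) (hp : 2 ≤ p)
    (F Γ : X → EuclideanSpace ℝ (Fin N))
    (hF : MemLp F (ENNReal.ofReal p) μ)
    (hΓ : MemLp Γ (ENNReal.ofReal (p / (p - 1))) μ)
    (h : ∀ σ : X → EuclideanSpace ℝ (Fin N), MemLp σ (ENNReal.ofReal p) μ →
        0 ≤ ∫ x, (inner ℝ (Γ x - ‖σ x‖ ^ (p - 2) • σ x) (F x - σ x) : ℝ) ∂μ) :
    ∀ᵐ x ∂μ, Γ x = ‖F x‖ ^ (p - 2) • F x := by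
  have hq := one_le_ofReal_conjExponent (by linarith : 1 < p)
  have hΓ_loc (s : Set X) (hμs : μ s < ∞) := hΓ.integrableOn_of_measure_lt_top hq hμs
  have hdiff : (fun x => Γ x - dualityMap p (F x)) =ᵐ[μ] 0 :=
    ae_eq_zero_of_forall_setIntegral_inner_eq_zero
      (fun s _ hμs => (hΓ_loc s hμs).sub
        ((hF.dualityMap_comp hp).integrableOn_of_measure_lt_top hq hμs))
      (fun s hs hμs => setIntegral_inner_sub_dualityMap_eq_zero hp h hF (hΓ_loc s hμs) hs hμs)
  filter_upwards [hdiff] with x hx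
  exact sub_eq_zero.mp hx

theorem minty_identification
    {X : Type*} [MeasurableSpace X] (μ : Measure X) [SigmaFinite μ]
    (N : ℕ) (hN : 1 ≤ N) (p : ℝ) (hp : 2 ≤ p)
    (F Γ : X → EuclideanSpace ℝ (Fin N))
    (hF : MemLp F (ENNReal.ofReal p) μ)
    (hΓ : MemLp Γ (ENNReal.ofReal (p / (p - 1))) μ)
    (h : ∀ σ : X → EuclideanSpace ℝ (Fin N), MemLp σ (ENNReal.ofReal p) μ →
        0 ≤ ∫ x, (inner ℝ (Γ x - ‖σ x‖ ^ (p - 2) • σ x) (F x - σ x) : ℝ) ∂μ) :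
    ∀ᵐ x ∂μ, Γ x = ‖F x‖ ^ (p - 2) • F x :=
  minty_identification_general μ N p hp F Γ hF hΓ h
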